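/- For every complex z with Re z > 0 and every real c > 0, e^{-z} = (1/(2πi)) ∫_{(c)} Γ(w) z^{-w} dw, where the integral is over the vertical line Re w = c. -/

import Mathlib

open MeasureTheory Complex Filter Topology Set
open scoped FourierTransform Real


-- step 1: integrability
lemma integrableOn_cpow_mul_exp {z : ℂ} (hz : 0 < z.re) {s : ℂ} (hs : 0 < s.re) :
    IntegrableOn (fun t : ℝ => (t : ℂ) ^ (s - 1) * Complex.exp (-(z * t))) (Ioi 0) := by
  have hbound : IntegrableOn (fun t : ℝ => t ^ (s.re - 1) * Real.exp (-z.re * t)) (Ioi 0) := by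
    have := integrableOn_rpow_mul_exp_neg_mul_rpow (s := s.re - 1) (p := 1)
      (by linarith) zero_lt_one hz
    simpa [Real.rpow_one] using this
  refine hbound.integrable.mono' ?_ ?_
  · refine (ContinuousOn.mul ?_ ?_).aestronglyMeasurable measurableSet_Ioi
    · intro t ht
      exact (Complex.continuousAt_ofReal_cpow_const _ _ (Or.inr (ne_of_gt ht))).continuousWithinAt
    · fun_prop
  · filter_upwards [ae_restrict_mem measurableSet_Ioi] with t ht
    rw [norm_mul,
      Complex.norm_cpow_eq_rpow_re_of_pos ht, Complex.norm_exp]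
    simp [Complex.sub_re, neg_mul]

-- derivative of the integral in z
lemma hasDerivAt_int {s : ℂ} (hs : 0 < s.re) {w₀ : ℂ} (hw : 0 < w₀.re) :
    HasDerivAt (fun w : ℂ => ∫ t : ℝ in Ioi 0, (t : ℂ) ^ (s - 1) * Complex.exp (-(w * t)))
      (∫ t : ℝ in Ioi 0, (t : ℂ) ^ (s - 1) * (Complex.exp (-(w₀ * t)) * -t)) w₀ := by
  set F : ℂ → ℝ → ℂ := fun w t => (t : ℂ) ^ (s - 1) * Complex.exp (-(w * t)) with hF
  set F' : ℂ → ℝ → ℂ := fun w t => (t : ℂ) ^ (s - 1) * (Complex.exp (-(w * t)) * -t) with hF'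
  have hmeas : ∀ w : ℂ, 0 < w.re → AEStronglyMeasurable (F' w) (volume.restrict (Ioi 0)) := by
    intro w hw'
    refine (ContinuousOn.mul ?_ (by fun_prop)).aestronglyMeasurable measurableSet_Ioi
    intro t ht
    exact (Complex.continuousAt_ofReal_cpow_const _ _ (Or.inr (ne_of_gt ht))).continuousWithinAt
  have key := hasDerivAt_integral_of_dominated_loc_of_deriv_le
    (μ := volume.restrict (Ioi 0)) (F := F) (F' := F') (x₀ := w₀)
    (bound := fun t : ℝ => t ^ s.re * Real.exp (-(w₀.re / 2) * t))
    (Metric.ball_mem_nhds _ (half_pos hw)) ?_ ?_ ?_ ?_ ?_ ?_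
  · exact key.2
  · filter_upwards with w
    refine (ContinuousOn.mul ?_ (by fun_prop)).aestronglyMeasurable measurableSet_Ioi
    intro t ht
    exact (Complex.continuousAt_ofReal_cpow_const _ _ (Or.inr (ne_of_gt ht))).continuousWithinAt
  · exact integrableOn_cpow_mul_exp hw hs
  · exact hmeas w₀ hw
  · rw [MeasureTheory.ae_restrict_iff' measurableSet_Ioi]
    filter_upwards with t ht w hw'
    have hwre : w₀.re / 2 ≤ w.re := by
      have h1 : |(w - w₀).re| ≤ ‖w - w₀‖ := Complex.abs_re_le_norm _
      have h2 : ‖w - w₀‖ < w₀.re / 2 := by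
        simpa [Complex.dist_eq] using (Metric.mem_ball.mp hw')
      have := abs_lt.mp (lt_of_le_of_lt h1 h2)
      simp only [Complex.sub_re] at this
      linarith [this.1]
    rw [norm_mul, norm_mul,
      Complex.norm_cpow_eq_rpow_re_of_pos ht, Complex.norm_exp]
    rw [norm_neg, Complex.norm_of_nonneg ht.le]
    calc t ^ (s - 1).re * (Real.exp ((-(w * ↑t)).re) * t)
        = t ^ (s.re - 1) * t * Real.exp (-w.re * t) := by
          simp [Complex.sub_re, neg_mul]; ring
      _ ≤ t ^ s.re * Real.exp (-(w₀.re / 2) * t) := by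
          rw [show t ^ (s.re - 1) * t = t ^ s.re by
            rw [← Real.rpow_add_one (ne_of_gt ht), sub_add_cancel]]
          exact mul_le_mul_of_nonneg_left (Real.exp_le_exp.mpr (by have ht' : 0 < t := ht; nlinarith))
            (Real.rpow_nonneg (le_of_lt ht) _)
  · have := integrableOn_rpow_mul_exp_neg_mul_rpow (s := s.re) (p := 1)
      (by linarith) zero_lt_one (half_pos hw)
    exact (by simpa [Real.rpow_one] using this :
      IntegrableOn (fun t : ℝ => t ^ s.re * Real.exp (-(w₀.re / 2) * t)) (Ioi 0))
  · filter_upwards with t w hw'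
    have h1 : HasDerivAt (fun w : ℂ => -(w * (t : ℂ))) (-(t : ℂ)) w := by
      simpa using ((hasDerivAt_id w).mul_const (t : ℂ)).fun_neg
    have h2 := (h1.cexp).const_mul ((t : ℂ) ^ (s - 1))
    convert h2 using 1

lemma integral_cpow_mul_exp {z : ℂ} (hz : 0 < z.re) {s : ℂ} (hs : 0 < s.re) :
    ∫ t : ℝ in Ioi 0, (t : ℂ) ^ (s - 1) * Complex.exp (-(z * t))
      = Complex.Gamma s * z ^ (-s) := by
  set U : Set ℂ := {w : ℂ | 0 < w.re} with hU
  have hUopen : IsOpen U := isOpen_lt continuous_const Complex.continuous_re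
  have hUconn : IsPreconnected U := (convex_halfSpace_re_gt 0).isPreconnected
  set F : ℂ → ℂ := fun w => ∫ t : ℝ in Ioi 0, (t : ℂ) ^ (s - 1) * Complex.exp (-(w * t)) with hFdef
  set G : ℂ → ℂ := fun w => Complex.Gamma s * w ^ (-s) with hGdef
  have hFa : AnalyticOnNhd ℂ F U := by
    refine DifferentiableOn.analyticOnNhd (fun w hw => ?_) hUopen
    exact (hasDerivAt_int hs hw).differentiableAt.differentiableWithinAt
  have hGa : AnalyticOnNhd ℂ G U := by
    refine DifferentiableOn.analyticOnNhd (fun w hw => ?_) hUopen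
    refine ((differentiableAt_id.cpow (differentiableAt_const _) ?_).const_mul
      _).differentiableWithinAt
    exact Complex.mem_slitPlane_iff.mpr (Or.inl hw)
  have h1U : (1 : ℂ) ∈ U := by simp [hU]
  have hfreq : ∃ᶠ w in 𝓝[≠] (1 : ℂ), F w = G w := by
    have htends : Tendsto (fun n : ℕ => ((1 + 1 / (n + 1) : ℝ) : ℂ)) atTop (𝓝[≠] (1 : ℂ)) := by
      rw [tendsto_nhdsWithin_iff]
      constructor
      · have : Tendsto (fun n : ℕ => (1 + 1 / (n + 1) : ℝ)) atTop (𝓝 1) := by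
          have := tendsto_one_div_add_atTop_nhds_zero_nat (𝕜 := ℝ)
          simpa using (tendsto_const_nhds (x := (1:ℝ))).add this
        exact (Complex.continuous_ofReal.tendsto 1).comp this
      · filter_upwards with n
        simp only [mem_compl_iff, mem_singleton_iff]
        intro h
        have : (1 + 1 / (n + 1) : ℝ) = 1 := by exact_mod_cast h
        have hpos : (0:ℝ) < 1 / (n + 1) := by positivity
        linarith
    refine htends.frequently (Frequently.of_forall fun n => ?_)
    set r : ℝ := 1 + 1 / (n + 1) with hr
    have hrpos : 0 < r := by positivity
    have key := Complex.integral_cpow_mul_exp_neg_mul_Ioi hs hrpos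
    have h2 : F (r : ℂ) = (1 / r : ℂ) ^ s * Complex.Gamma s := by
      rw [hFdef]; exact key
    rw [h2, hGdef]
    have : (1 / (r : ℂ)) ^ s = (r : ℂ) ^ (-s) := by
      have harg : (r : ℂ).arg ≠ Real.pi := by
        rw [Complex.arg_ofReal_of_nonneg hrpos.le]
        exact Real.pi_ne_zero.symm
      rw [one_div, Complex.inv_cpow _ _ harg, ← Complex.cpow_neg]
    rw [this]; ring
  have := hFa.eqOn_of_preconnected_of_frequently_eq hGa hUconn h1U hfreq
  exact this hz

theorem rexp_neg_deriv_aux' :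
    ∀ x ∈ (univ : Set ℝ), HasDerivWithinAt (Real.exp ∘ Neg.neg) (-Real.exp (-x)) univ x :=
  fun x _ ↦ mul_neg_one (Real.exp (-x)) ▸
    ((Real.hasDerivAt_exp (-x)).comp x (hasDerivAt_neg x)).hasDerivWithinAt

theorem rexp_neg_image_aux' : Real.exp ∘ Neg.neg '' univ = Ioi 0 := by
  rw [Set.image_comp, Set.image_univ_of_surjective neg_surjective, Set.image_univ, Real.range_exp]

theorem rexp_neg_injOn_aux' : (univ : Set ℝ).InjOn (Real.exp ∘ Neg.neg) :=
  Real.exp_injective.injOn.comp neg_injective.injOn (univ.mapsTo_univ _)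

/-- integrability of `u ↦ exp (-σ u - z e^{-u})` on ℝ. -/
lemma integrable_gk {z : ℂ} (hz : 0 < z.re) {σ : ℝ} (hσ : 0 < σ) :
    Integrable (fun u : ℝ => Complex.exp (-σ * u - z * Complex.exp (-u))) := by
  have hf : IntegrableOn (fun t : ℝ => (t : ℂ) ^ ((σ : ℂ) - 1) •
      Complex.exp (-(z * t))) (Ioi 0) := by
    simpa [smul_eq_mul] using integrableOn_cpow_mul_exp hz (s := (σ : ℂ)) (by simpa using hσ)
  rw [← rexp_neg_image_aux', integrableOn_image_iff_integrableOn_abs_deriv_smul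
      MeasurableSet.univ rexp_neg_deriv_aux' rexp_neg_injOn_aux'] at hf
  replace hf : Integrable (fun x : ℝ =>
      Complex.exp (-↑x) * (Complex.exp (-↑x) ^ ((σ:ℂ) - 1) * Complex.exp (-(z * Complex.exp (-↑x))))) := by
    simpa using hf
  refine hf.congr (Filter.Eventually.of_forall fun u => ?_)
  have hlog : Complex.log (Complex.exp (-(u:ℂ))) = -(u:ℂ) :=
    Complex.log_exp (by simpa using Real.pi_pos) (by simpa using Real.pi_nonneg)
  simp only []
  rw [Complex.cpow_def_of_ne_zero (Complex.exp_ne_zero _), hlog, ← Complex.exp_add,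
    ← Complex.exp_add]
  congr 1
  ring

section Fourier

variable {z : ℂ} (hz : 0 < z.re) {c : ℝ} (hc : 0 < c)

/-- Integrability of exp(-u)^k * G0 -/
lemma integrable_pow_gk {z : ℂ} (hz : 0 < z.re) {c : ℝ} (hc : 0 < c) (k : ℕ) :
    Integrable (fun u : ℝ => Complex.exp (-(u:ℂ)) ^ k *
      Complex.exp (-c * u - z * Complex.exp (-u))) := by
  refine (integrable_gk hz (show (0:ℝ) < c + k by positivity)).congr
    (Filter.Eventually.of_forall fun u => ?_)
  simp only []
  rw [← Complex.exp_nat_mul, ← Complex.exp_add]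
  congr 1
  push_cast
  ring

set_option maxHeartbeats 1000000 in
lemma integrable_fourier_G0 {z : ℂ} (hz : 0 < z.re) {c : ℝ} (hc : 0 < c) :
    Integrable (𝓕 (fun u : ℝ => Complex.exp (-c * u - z * Complex.exp (-u)))) := by
  set G0 : ℝ → ℂ := fun u => Complex.exp (-c * u - z * Complex.exp (-u)) with hG0
  set G1 : ℝ → ℂ := fun u => (-c + z * Complex.exp (-(u:ℂ))) * G0 u with hG1
  set G2 : ℝ → ℂ := fun u => (z * (Complex.exp (-(u:ℂ)) * -1)) * G0 u
    + (-c + z * Complex.exp (-(u:ℂ))) * G1 u with hG2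
  -- derivatives
  have hinner : ∀ u : ℝ, HasDerivAt (fun u : ℝ => -(c:ℂ) * u - z * Complex.exp (-(u:ℂ)))
      (-(c:ℂ) + z * Complex.exp (-(u:ℂ))) u := by
    intro u
    have h1 : HasDerivAt (fun u : ℝ => ((u:ℝ) : ℂ)) 1 u := Complex.ofRealCLM.hasDerivAt
    have h2 : HasDerivAt (fun u : ℝ => -(c:ℂ) * u) (-(c:ℂ) * 1) u := h1.const_mul _
    have h3 : HasDerivAt (fun u : ℝ => Complex.exp (-(u:ℂ)))
        (Complex.exp (-(u:ℂ)) * -1) u := (h1.neg.cexp).congr_deriv (by simp)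
    have h4 := h2.fun_sub ((h3.const_mul z))
    exact h4.congr_deriv (by ring)
  have hd0 : ∀ u : ℝ, HasDerivAt G0 (G1 u) u := by
    intro u
    have := (hinner u).cexp
    convert this using 1
    simp only [hG1, hG0]
    ring
  have hd1 : ∀ u : ℝ, HasDerivAt G1 (G2 u) u := by
    intro u
    have h1 : HasDerivAt (fun u : ℝ => ((u:ℝ) : ℂ)) 1 u := Complex.ofRealCLM.hasDerivAt
    have h3 : HasDerivAt (fun u : ℝ => Complex.exp (-(u:ℂ)))
        (Complex.exp (-(u:ℂ)) * -1) u := (h1.neg.cexp).congr_deriv (by simp)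
    have h5 : HasDerivAt (fun u : ℝ => -(c:ℂ) + z * Complex.exp (-(u:ℂ)))
        (z * (Complex.exp (-(u:ℂ)) * -1)) u := ((h3.const_mul z).const_add _)
    exact (h5.mul (hd0 u))
  have hder0 : deriv G0 = G1 := funext fun u => (hd0 u).deriv
  have hder1 : deriv G1 = G2 := funext fun u => (hd1 u).deriv
  -- integrability of G0 G1 G2
  have iG0 : Integrable G0 := by
    refine (integrable_pow_gk hz hc 0).congr (Filter.Eventually.of_forall fun u => ?_)
    simp only [hG0, pow_zero, one_mul]
  have iG1 : Integrable G1 := by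
    have := ((integrable_pow_gk hz hc 0).const_mul (-(c:ℂ))).add
      ((integrable_pow_gk hz hc 1).const_mul z)
    refine this.congr (Filter.Eventually.of_forall fun u => ?_)
    simp only [Pi.add_apply, hG1, hG0, pow_zero, pow_one, one_mul, neg_mul]
    ring
  have iG2 : Integrable G2 := by
    have := (((integrable_pow_gk hz hc 0).const_mul ((c:ℂ)^2)).add
      ((integrable_pow_gk hz hc 1).const_mul (-z - 2*c*z))).add
      ((integrable_pow_gk hz hc 2).const_mul (z^2))
    refine this.congr (Filter.Eventually.of_forall fun u => ?_)
    simp only [Pi.add_apply, hG2, hG1, hG0, pow_zero, pow_one, pow_two, one_mul, neg_mul]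
    ring
  -- Fourier relations
  have hftd0 : 𝓕 G1 = fun x : ℝ => (2 * π * I * x) • 𝓕 G0 x := by
    rw [← hder0]
    exact Real.fourier_deriv iG0 (fun u => (hd0 u).differentiableAt)
      (hder0 ▸ iG1)
  have hftd1 : 𝓕 G2 = fun x : ℝ => (2 * π * I * x) • 𝓕 G1 x := by
    rw [← hder1]
    exact Real.fourier_deriv iG1 (fun u => (hd1 u).differentiableAt)
      (hder1 ▸ iG2)
  -- now the decay bound
  obtain ⟨C0, hC0nn, hb0⟩ : ∃ C0 : ℝ, 0 ≤ C0 ∧ ∀ x : ℝ, ‖𝓕 G0 x‖ ≤ C0 :=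
    ⟨∫ u : ℝ, ‖G0 u‖, integral_nonneg fun u => norm_nonneg _,
      fun x => VectorFourier.norm_fourierIntegral_le_integral_norm _ _ _ _ _⟩
  obtain ⟨C2, hC2nn, hb2⟩ : ∃ C2 : ℝ, 0 ≤ C2 ∧ ∀ x : ℝ, ‖𝓕 G2 x‖ ≤ C2 :=
    ⟨∫ u : ℝ, ‖G2 u‖, integral_nonneg fun u => norm_nonneg _,
      fun x => VectorFourier.norm_fourierIntegral_le_integral_norm _ _ _ _ _⟩
  set K : ℝ := max C0 (C2 / (4 * π ^ 2)) with hK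
  have hbound : ∀ x : ℝ, ‖𝓕 G0 x‖ ≤ 2 * K * (1 + x ^ 2)⁻¹ := by
    intro x
    rcases le_or_gt (|x|) 1 with hx | hx
    · have h1 : (1 + x ^ 2) ≤ 2 := by nlinarith [abs_nonneg x, _root_.sq_abs x]
      have h2 : (1:ℝ) / 2 ≤ (1 + x ^ 2)⁻¹ := by
        rw [one_div]
        exact inv_anti₀ (by positivity) h1
      calc ‖𝓕 G0 x‖ ≤ C0 := hb0 x
        _ ≤ K := le_max_left _ _
        _ = 2 * K * (1/2) := by ring
        _ ≤ 2 * K * (1 + x ^ 2)⁻¹ := by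
            have hKnn : 0 ≤ K := le_trans hC0nn (le_max_left _ _)
            gcongr
    · have hx0 : x ≠ 0 := by intro h; rw [h] at hx; norm_num at hx
      have heq : ‖𝓕 G2 x‖ = (2 * π * |x|) ^ 2 * ‖𝓕 G0 x‖ := by
        rw [hftd1, hftd0]
        simp only [norm_smul]
        rw [show ((2:ℂ) * π * I * x) = ((2 * π * x : ℝ) : ℂ) * I by push_cast; ring]
        simp [abs_mul, abs_of_pos Real.pi_pos]
        ring
      have h3 : (2 * π * |x|) ^ 2 * ‖𝓕 G0 x‖ ≤ C2 := heq ▸ hb2 x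
      have h4 : ‖𝓕 G0 x‖ ≤ C2 / (4 * π ^ 2 * x ^ 2) := by
        rw [le_div_iff₀ (by positivity)]
        calc ‖𝓕 G0 x‖ * (4 * π ^ 2 * x ^ 2) = (2 * π * |x|) ^ 2 * ‖𝓕 G0 x‖ := by
              rw [mul_pow, mul_pow, _root_.sq_abs]; ring
          _ ≤ C2 := h3
      refine h4.trans ?_
      have h5 : C2 / (4 * π ^ 2 * x ^ 2) = (C2 / (4 * π ^ 2)) * (x ^ 2)⁻¹ := by
        field_simp
      rw [h5]
      have h6 : (x ^ 2)⁻¹ ≤ 2 * (1 + x ^ 2)⁻¹ := by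
        have hx2 : 1 ≤ x ^ 2 := by nlinarith [_root_.sq_abs x, abs_nonneg x]
        rw [show (2:ℝ) * (1 + x ^ 2)⁻¹ = ((1 + x ^ 2) / 2)⁻¹ by field_simp]
        exact inv_anti₀ (by positivity) (by linarith)
      have hC2nn' : 0 ≤ C2 / (4 * π ^ 2) := by positivity
      calc C2 / (4 * π ^ 2) * (x ^ 2)⁻¹
          ≤ C2 / (4 * π ^ 2) * (2 * (1 + x ^ 2)⁻¹) :=
            mul_le_mul_of_nonneg_left h6 hC2nn'
        _ ≤ K * (2 * (1 + x ^ 2)⁻¹) := by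
            have : (0:ℝ) ≤ 2 * (1 + x ^ 2)⁻¹ := by positivity
            exact mul_le_mul_of_nonneg_right (le_max_right _ _) this
        _ = 2 * K * (1 + x ^ 2)⁻¹ := by ring
  have hmeas : AEStronglyMeasurable (𝓕 G0) volume :=
    (VectorFourier.fourierIntegral_continuous Real.continuous_fourierChar
      (by exact continuous_inner) iG0).aestronglyMeasurable
  refine Integrable.mono' ((integrable_inv_one_add_sq).const_mul (2 * K)) hmeas
    (Filter.Eventually.of_forall fun x => ?_)
  simpa [mul_assoc] using hbound x

end Fourier

/-- Mellin inversion: e^{-z} = (1/(2πi)) ∫_{(c)} Γ(w) z^{-w} dw for Re z > 0, c > 0. -/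
theorem exp_neg_eq_mellin_inversion (z : ℂ) (hz : 0 < z.re) (c : ℝ) (hc : 0 < c) :
    Tendsto (fun T : ℝ => (1 / (2 * (Real.pi : ℂ) * I)) *
        ∫ t in (-T)..T, Complex.Gamma (c + t * I) * z ^ (-((c : ℂ) + t * I)) * I)
      atTop (𝓝 (Complex.exp (-z))) := by
  set f : ℝ → ℂ := fun x => Complex.exp (-(z * x)) with hf
  have hre : ∀ t : ℝ, ((c : ℂ) + t * I).re = c := by intro t; simp
  have him : ∀ t : ℝ, ((c : ℂ) + t * I).im = t := by intro t; simp
  have key : ∀ t : ℝ, mellin f ((c:ℂ) + t * I)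
      = Complex.Gamma ((c:ℂ) + t * I) * z ^ (-((c:ℂ) + t * I)) := by
    intro t
    have hs : 0 < ((c:ℂ) + t * I).re := by rw [hre]; exact hc
    rw [mellin]
    simpa [smul_eq_mul] using integral_cpow_mul_exp hz hs
  set G0 : ℝ → ℂ := fun u => Complex.exp (-c * u - z * Complex.exp (-u)) with hG0
  have hGg : ∀ t : ℝ,
      (fun u : ℝ => Real.exp (-((c:ℂ) + t * I).re * u) • f (Real.exp (-u))) = G0 := by
    intro t
    funext u
    rw [hre]
    simp only [hG0, hf, Complex.real_smul, Complex.ofReal_exp]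
    rw [← Complex.exp_add]
    congr 1
    push_cast
    ring
  have hmf : ∀ t : ℝ, mellin f ((c:ℂ) + t * I) = 𝓕 G0 (t / (2 * π)) := by
    intro t
    rw [mellin_eq_fourier, hGg t, him]
  have hFf : Complex.VerticalIntegrable (mellin f) c := by
    unfold Complex.VerticalIntegrable
    have h2π : (2 * π : ℝ) ≠ 0 := by positivity
    refine ((integrable_fourier_G0 hz hc).comp_div h2π).congr ?_
    filter_upwards with t
    exact (hmf t).symm
  have hconv : MellinConvergent f c := by
    unfold MellinConvergent
    simpa [smul_eq_mul] using integrableOn_cpow_mul_exp hz (s := (c:ℂ)) (by simpa using hc)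
  have hcont : ContinuousAt f 1 := by fun_prop
  have hinv := mellinInv_mellin_eq c f one_pos hconv hFf hcont
  have hval : ∫ t : ℝ, mellin f ((c:ℂ) + t * I) = 2 * π * Complex.exp (-z) := by
    have h1 : mellinInv c (mellin f) 1 = Complex.exp (-z) := by
      rw [hinv]; simp [hf]
    rw [mellinInv] at h1
    simp only [Complex.ofReal_one, Complex.one_cpow, one_smul] at h1
    rw [Complex.real_smul] at h1
    have h2π : ((2 * π : ℝ) : ℂ) ≠ 0 := by
      simp only [ne_eq, Complex.ofReal_eq_zero]
      positivity
    have h2π' : (2 * (π:ℂ)) ≠ 0 := by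
      intro h
      rw [mul_eq_zero] at h
      rcases h with h | h
      · norm_num at h
      · exact Real.pi_ne_zero (by exact_mod_cast h)
    push_cast at h1
    rw [one_div, inv_mul_eq_div, div_eq_iff h2π'] at h1
    rw [h1]
    ring
  have hint : Integrable (fun t : ℝ =>
      Complex.Gamma ((c:ℂ) + t * I) * z ^ (-((c:ℂ) + t * I)) * I) := by
    exact (hFf.congr (Filter.Eventually.of_forall fun t => key t)).mul_const I
  have hval2 : (∫ t : ℝ, Complex.Gamma ((c:ℂ) + t * I) * z ^ (-((c:ℂ) + t * I)) * I)
      = 2 * π * Complex.exp (-z) * I := by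
    rw [MeasureTheory.integral_mul_const]
    rw [integral_congr_ae (Filter.Eventually.of_forall fun t => (key t).symm), hval]
  have htt := MeasureTheory.intervalIntegral_tendsto_integral hint
    tendsto_neg_atTop_atBot tendsto_id
  have hfin := htt.const_mul ((1 : ℂ) / (2 * π * I))
  rw [hval2] at hfin
  have heq : (1 : ℂ) / (2 * π * I) * (2 * π * Complex.exp (-z) * I) = Complex.exp (-z) := by
    have hπ : ((π : ℂ)) ≠ 0 := by
      simp only [ne_eq, Complex.ofReal_eq_zero]
      exact Real.pi_ne_zero
    field_simp
  rw [heq] at hfin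
  exact hfin
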